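/- The selective z-test has level 0.05: if Z = (Z₁, Z₂) ~ N(μ, I₂) truncated to {z₁ ∈ A}, η·μ = δ, and the test rejects when D = η·Z falls below the 0.025-quantile or above the 0.975-quantile of the N(δ, ‖η‖²) distribution truncated to (‖η‖²A - η₂M)/η₁ (with M = η⊥·Z), then the probability of rejection is exactly 0.05. -/

import Mathlib

open MeasureTheory ProbabilityTheory

/-- Normalized truncation (conditioning) of a measure on `ℝ` to a set. -/
noncomputable def truncTo (ν : Measure ℝ) (S : Set ℝ) : Measure ℝ :=
  (ν S)⁻¹ • ν.restrict S

/-- Normalized truncation of a measure on `ℝ × ℝ` to a set. -/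
noncomputable def truncTo2 (ν : Measure (ℝ × ℝ)) (S : Set (ℝ × ℝ)) : Measure (ℝ × ℝ) :=
  (ν S)⁻¹ • ν.restrict S

/-- The `p`-quantile of a distribution `ν` on `ℝ`. -/
noncomputable def quantile (ν : Measure ℝ) (p : ℝ) : ℝ :=
  sInf {x : ℝ | p ≤ (ν (Set.Iic x)).toReal}

/-!
Writing `M = η⊥·Z` and `D = η·Z`, the pair `(M, D)` is a linear image of the Gaussian vector
`N(μ, I₂)`, and `cov(M, D) = 0`, so `M` and `D` are independent with `D ~ N(η·μ, ‖η‖²)`.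
The truncation event `{Z₁ ∈ A}` is an event `{(M, D) ∈ S}`, since `Z₁ = (η₁ D + η₂ M) / ‖η‖²`.
By Fubini over `M`, the rejection probability inside `S` is an average over `m` of the
`N(η·μ, ‖η‖²)`-mass of the rejection region inside the slice `S_m`; the quantiles are those of
this Gaussian truncated to `S_m`, which is atomless, so each slice contributes exactly
`0.05` times its mass.
-/

open Filter Set Topology

lemma tendsto_measure_Iic_atBot (ν : Measure ℝ) [IsFiniteMeasure ν] :
    Tendsto (fun x ↦ ν (Iic x)) atBot (𝓝 0) := by
  have h := tendsto_measure_iInter_atBot (μ := ν) (fun x ↦ measurableSet_Iic.nullMeasurableSet)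
    monotone_Iic ⟨0, measure_ne_top ν _⟩
  rwa [iInter_Iic_eq_empty_iff.2 (by simp [not_bddBelow_univ]), measure_empty] at h

section Quantile

variable (ν : Measure ℝ) {p : ℝ}

lemma bddBelow_quantile_setOf [IsFiniteMeasure ν] (hp : 0 < p) :
    BddBelow {x : ℝ | p ≤ (ν (Iic x)).toReal} := by
  have h := (ENNReal.tendsto_toReal ENNReal.zero_ne_top).comp (tendsto_measure_Iic_atBot ν)
  obtain ⟨a, ha⟩ := eventually_atBot.1 (h.eventually (eventually_lt_nhds hp))
  exact ⟨a, fun x hx ↦ le_of_not_gt fun hxa ↦ (ha x hxa.le).not_ge hx⟩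

-- The first disjunct is the case of an empty defining set, where `sInf` takes the value `0`.
lemma quantile_lt_iff [IsFiniteMeasure ν] (hp : 0 < p) (t : ℝ) :
    quantile ν p < t ↔ ((∀ r : ℚ, (ν (Iic (r : ℝ))).toReal < p) ∧ 0 < t) ∨
      ∃ r : ℚ, (r : ℝ) < t ∧ p ≤ (ν (Iic (r : ℝ))).toReal := by
  have hmono : Monotone fun x ↦ (ν (Iic x)).toReal := fun x y hxy ↦
    ENNReal.toReal_mono (measure_ne_top ν _) (measure_mono (Iic_subset_Iic.2 hxy))
  rcases {x : ℝ | p ≤ (ν (Iic x)).toReal}.eq_empty_or_nonempty with hempty | hne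
  · have hlt : ∀ x : ℝ, (ν (Iic x)).toReal < p := fun x ↦ not_le.1 fun hx ↦ hempty.subset hx
    simp [quantile, hempty, hlt]
  · obtain ⟨x, hx⟩ := hne
    obtain ⟨r, hr⟩ := exists_rat_gt x
    have hnot : ¬ ∀ r : ℚ, (ν (Iic (r : ℝ))).toReal < p := fun h ↦
      (h r).not_ge (hx.trans (hmono hr.le))
    simp only [hnot, false_and, false_or, quantile,
      csInf_lt_iff (bddBelow_quantile_setOf ν hp) ⟨x, hx⟩]
    constructor
    · rintro ⟨y, hy, hyt⟩
      obtain ⟨r, hyr, hrt⟩ := exists_rat_btwn hyt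
      exact ⟨r, hrt, hy.trans (hmono hyr.le)⟩
    · rintro ⟨r, hrt, hr⟩
      exact ⟨r, hr, hrt⟩

lemma nonempty_setOf_le_cdf (hp : p < 1) : {x | p ≤ cdf ν x}.Nonempty :=
  ((tendsto_cdf_atTop ν).eventually (eventually_ge_nhds hp)).exists

variable [IsProbabilityMeasure ν]

lemma quantile_eq_sInf_cdf (p : ℝ) : quantile ν p = sInf {x | p ≤ cdf ν x} := by
  simp [quantile, cdf_eq_real, measureReal_def]

lemma bddBelow_setOf_le_cdf (hp : 0 < p) : BddBelow {x | p ≤ cdf ν x} := by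
  simpa [cdf_eq_real, measureReal_def] using bddBelow_quantile_setOf ν hp

lemma cdf_quantile [NullSingletonClass ν] (hp₀ : 0 < p) (hp₁ : p < 1) :
    cdf ν (quantile ν p) = p := by
  have hbdd := bddBelow_setOf_le_cdf ν hp₀
  rw [quantile_eq_sInf_cdf]
  set q := sInf {x | p ≤ cdf ν x}
  apply le_antisymm
  · -- `cdf ν` has no jump at `q`, and lies below `p` to the left of `q`
    have hleft : Function.leftLim (cdf ν) q ≤ p :=
      le_of_tendsto ((cdf ν).mono.tendsto_leftLim q) <| eventually_nhdsWithin_of_forall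
        fun x (hx : x < q) ↦ le_of_lt <| not_le.1 fun h ↦ hx.not_ge (csInf_le hbdd h)
    have hjump := (cdf ν).measure_singleton q
    rw [measure_cdf, measure_singleton, eq_comm, ENNReal.ofReal_eq_zero, sub_nonpos] at hjump
    exact hjump.trans hleft
  · refine ge_of_tendsto ((cdf ν).right_continuous q |>.mono_left
      (nhdsWithin_mono q Ioi_subset_Ici_self)) (eventually_nhdsWithin_of_forall fun x hx ↦ ?_)
    obtain ⟨y, hy, hyx⟩ := (csInf_lt_iff hbdd (nonempty_setOf_le_cdf ν hp₁)).1 hx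
    exact hy.trans (monotone_cdf ν hyx.le)

lemma measure_Iio_quantile [NullSingletonClass ν] (hp₀ : 0 < p) (hp₁ : p < 1) :
    ν (Iio (quantile ν p)) = ENNReal.ofReal p := by
  rw [measure_congr Iio_ae_eq_Iic, ← ofReal_cdf, cdf_quantile ν hp₀ hp₁]

lemma measure_Ioi_quantile [NullSingletonClass ν] (hp₀ : 0 < p) (hp₁ : p < 1) :
    ν (Ioi (quantile ν p)) = ENNReal.ofReal (1 - p) := by
  rw [← compl_Iic, prob_compl_eq_one_sub measurableSet_Iic, ← ofReal_cdf, cdf_quantile ν hp₀ hp₁,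
    ← ENNReal.ofReal_one, ENNReal.ofReal_sub _ hp₀.le]

lemma quantile_mono {p₁ p₂ : ℝ} (hp₁ : 0 < p₁) (hp : p₁ ≤ p₂) (hp₂ : p₂ < 1) :
    quantile ν p₁ ≤ quantile ν p₂ := by
  simp only [quantile_eq_sInf_cdf]
  exact csInf_le_csInf (bddBelow_setOf_le_cdf ν hp₁) (nonempty_setOf_le_cdf ν hp₂)
    fun x hx ↦ hp.trans hx

lemma measure_Iio_quantile_union_Ioi_quantile [NullSingletonClass ν] {a b : ℝ} (ha : 0 < a)
    (hab : a ≤ b) (hb : b < 1) :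
    ν (Iio (quantile ν a) ∪ Ioi (quantile ν b)) = ENNReal.ofReal (a + (1 - b)) := by
  rw [measure_union (Iio_disjoint_Ioi_of_le (quantile_mono ν ha hab hb)) measurableSet_Ioi,
    measure_Iio_quantile ν ha (hab.trans_lt hb), measure_Ioi_quantile ν (ha.trans_le hab) hb,
    ENNReal.ofReal_add ha.le (by linarith)]

end Quantile

lemma measurable_quantile {α : Type*} [MeasurableSpace α] {ν : α → Measure ℝ}
    [∀ a, IsFiniteMeasure (ν a)] (hν : ∀ x, Measurable fun a ↦ ν a (Iic x)) {p : ℝ} (hp : 0 < p) :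
    Measurable fun a ↦ quantile (ν a) p := by
  refine measurable_of_Iio fun t ↦ ?_
  simp only [preimage, mem_Iio, quantile_lt_iff _ hp]
  have hF : ∀ r : ℚ, Measurable fun a ↦ (ν a (Iic (r : ℝ))).toReal := fun r ↦ (hν r).ennreal_toReal
  measurability

section Truncation

variable (ν : Measure ℝ) (S : Set ℝ)

lemma truncTo_apply {B : Set ℝ} (hB : MeasurableSet B) :
    truncTo ν S B = (ν S)⁻¹ * ν (B ∩ S) := by
  rw [truncTo, Measure.smul_apply, Measure.restrict_apply hB, smul_eq_mul]

instance : IsFiniteMeasure (truncTo ν S) :=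
  ⟨by simpa [truncTo_apply _ _ MeasurableSet.univ] using
    (ENNReal.inv_mul_le_one _).trans_lt ENNReal.one_lt_top⟩

instance [NullSingletonClass ν] : NullSingletonClass (truncTo ν S) :=
  ⟨fun x ↦ by simp [truncTo]⟩

lemma isProbabilityMeasure_truncTo [IsFiniteMeasure ν] (h : ν S ≠ 0) :
    IsProbabilityMeasure (truncTo ν S) :=
  ⟨by rw [truncTo_apply _ _ MeasurableSet.univ, univ_inter,
    ENNReal.inv_mul_cancel h (measure_ne_top ν S)]⟩

end Truncation

def rejectionRegion (ν : Measure ℝ) (a b : ℝ) : Set ℝ :=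
  Iio (quantile ν a) ∪ Ioi (quantile ν b)

lemma measure_rejectionRegion_truncTo_inter (ν : Measure ℝ) [IsFiniteMeasure ν]
    [NullSingletonClass ν] (S : Set ℝ) {a b : ℝ} (ha : 0 < a) (hab : a ≤ b) (hb : b < 1) :
    ν (rejectionRegion (truncTo ν S) a b ∩ S) = ENNReal.ofReal (a + (1 - b)) * ν S := by
  rcases eq_or_ne (ν S) 0 with h | h
  · simp [h, measure_mono_null inter_subset_right h]
  have := isProbabilityMeasure_truncTo ν S h
  rw [rejectionRegion, ← measure_Iio_quantile_union_Ioi_quantile (truncTo ν S) ha hab hb,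
    truncTo_apply _ _ (measurableSet_Iio.union measurableSet_Ioi), mul_comm, ← mul_assoc,
    ENNReal.mul_inv_cancel h (measure_ne_top ν S), one_mul]

section Sections

variable (κ : Measure ℝ) [IsFiniteMeasure κ] {S : Set (ℝ × ℝ)}

lemma measurable_quantile_truncTo_section (hS : MeasurableSet S) {p : ℝ} (hp : 0 < p) :
    Measurable fun m ↦ quantile (truncTo κ (Prod.mk m ⁻¹' S)) p := by
  refine measurable_quantile (fun x ↦ ?_) hp
  simp only [truncTo_apply _ _ measurableSet_Iic]
  exact (measurable_measure_prodMk_left hS).inv.mul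
    (measurable_measure_prodMk_left ((measurableSet_le measurable_snd measurable_const).inter hS))

lemma measurableSet_rejectionRegion_section (hS : MeasurableSet S) {a b : ℝ} (ha : 0 < a)
    (hb : 0 < b) :
    MeasurableSet {w : ℝ × ℝ | w.2 ∈ rejectionRegion (truncTo κ (Prod.mk w.1 ⁻¹' S)) a b} :=
  (measurableSet_lt measurable_snd
    ((measurable_quantile_truncTo_section κ hS ha).comp measurable_fst)).union
  (measurableSet_lt ((measurable_quantile_truncTo_section κ hS hb).comp measurable_fst)
    measurable_snd)

variable [NullSingletonClass κ] {a b : ℝ}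

lemma prod_inter_rejectionRegion_section (hS : MeasurableSet S) (ha : 0 < a) (hab : a ≤ b)
    (hb : b < 1) (μ : Measure ℝ) [SFinite μ] :
    (μ.prod κ) ({w | w.2 ∈ rejectionRegion (truncTo κ (Prod.mk w.1 ⁻¹' S)) a b} ∩ S)
      = ENNReal.ofReal (a + (1 - b)) * (μ.prod κ) S := by
  rw [Measure.prod_apply
      ((measurableSet_rejectionRegion_section κ hS ha (ha.trans_le hab)).inter hS),
    Measure.prod_apply hS, ← lintegral_const_mul _ (measurable_measure_prodMk_left hS)]
  refine lintegral_congr fun m ↦ ?_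
  rw [← measure_rejectionRegion_truncTo_inter κ _ ha hab hb]
  rfl

theorem truncTo2_preimage_rejectionRegion_section (hS : MeasurableSet S) (ha : 0 < a)
    (hab : a ≤ b) (hb : b < 1) {γ : Measure (ℝ × ℝ)} [IsFiniteMeasure γ]
    {Φ : ℝ × ℝ → ℝ × ℝ} (hΦ : Measurable Φ) {μ : Measure ℝ} [SFinite μ]
    (hlaw : γ.map Φ = μ.prod κ) (hγS : γ (Φ ⁻¹' S) ≠ 0) :
    truncTo2 γ (Φ ⁻¹' S)
        (Φ ⁻¹' {w | w.2 ∈ rejectionRegion (truncTo κ (Prod.mk w.1 ⁻¹' S)) a b})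
      = ENNReal.ofReal (a + (1 - b)) := by
  have hpre : ∀ X, MeasurableSet X → γ (Φ ⁻¹' X) = (μ.prod κ) X := fun X hX ↦ by
    rw [← hlaw, Measure.map_apply hΦ hX]
  rw [truncTo2, Measure.smul_apply, Measure.restrict_apply' (hΦ hS), smul_eq_mul,
    ← preimage_inter,
    hpre _ ((measurableSet_rejectionRegion_section κ hS ha (ha.trans_le hab)).inter hS),
    prod_inter_rejectionRegion_section κ hS ha hab hb, ← hpre _ hS, mul_left_comm,
    ENNReal.inv_mul_cancel hγS (measure_ne_top _ _), mul_one]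

end Sections

section RotatedGaussian

variable (μ₁ μ₂ η₁ η₂ : ℝ)

lemma covariance_perp_dot_gaussianReal_prod :
    cov[fun z : ℝ × ℝ ↦ η₂ * z.1 - η₁ * z.2, fun z ↦ η₁ * z.1 + η₂ * z.2;
      (gaussianReal μ₁ 1).prod (gaussianReal μ₂ 1)] = 0 := by
  set P := (gaussianReal μ₁ 1).prod (gaussianReal μ₂ 1)
  set X : ℝ × ℝ → ℝ := fun z ↦ z.1
  set Y : ℝ × ℝ → ℝ := fun z ↦ z.2
  have hX : MemLp X 2 P := (memLp_id_gaussianReal 2).comp_fst _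
  have hY : MemLp Y 2 P := (memLp_id_gaussianReal 2).comp_snd _
  have hXX : cov[X, X; P] = 1 := by
    rw [covariance_self hX.aemeasurable,
      measurePreserving_fst.variance_fun_comp (f := fun x ↦ x) aemeasurable_id,
      variance_fun_id_gaussianReal, NNReal.coe_one]
  have hYY : cov[Y, Y; P] = 1 := by
    rw [covariance_self hY.aemeasurable,
      measurePreserving_snd.variance_fun_comp (f := fun x ↦ x) aemeasurable_id,
      variance_fun_id_gaussianReal, NNReal.coe_one]
  have hXY : cov[X, Y; P] = 0 :=
    covariance_fst_snd_prod (X := fun x ↦ x) (Y := fun x ↦ x) (memLp_id_gaussianReal 2)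
      (memLp_id_gaussianReal 2)
  change cov[(fun z ↦ η₂ * X z) - (fun z ↦ η₁ * Y z),
    (fun z ↦ η₁ * X z) + (fun z ↦ η₂ * Y z); P] = 0
  rw [covariance_sub_left (hX.const_mul _) (hY.const_mul _)
      ((hX.const_mul _).add (hY.const_mul _)),
    covariance_add_right (hX.const_mul _) (hX.const_mul _) (hY.const_mul _),
    covariance_add_right (hY.const_mul _) (hX.const_mul _) (hY.const_mul _)]
  simp only [covariance_const_mul_left, covariance_const_mul_right, covariance_comm Y X,
    hXX, hYY, hXY]
  ring

lemma indepFun_perp_dot_gaussianReal_prod :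
    IndepFun (fun z : ℝ × ℝ ↦ η₂ * z.1 - η₁ * z.2) (fun z ↦ η₁ * z.1 + η₂ * z.2)
      ((gaussianReal μ₁ 1).prod (gaussianReal μ₂ 1)) := by
  refine HasGaussianLaw.indepFun_of_covariance_eq_zero ?_
    (covariance_perp_dot_gaussianReal_prod μ₁ μ₂ η₁ η₂)
  let fst := ContinuousLinearMap.fst ℝ ℝ ℝ
  let snd := ContinuousLinearMap.snd ℝ ℝ ℝ
  exact IsGaussian.hasGaussianLaw_id.map_fun ((η₂ • fst - η₁ • snd).prod (η₁ • fst + η₂ • snd))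

lemma map_dot_gaussianReal_prod :
    ((gaussianReal μ₁ 1).prod (gaussianReal μ₂ 1)).map (fun z ↦ η₁ * z.1 + η₂ * z.2)
      = gaussianReal (η₁ * μ₁ + η₂ * μ₂) (η₁ ^ 2 + η₂ ^ 2).toNNReal := by
  have : (fun z : ℝ × ℝ ↦ η₁ * z.1 + η₂ * z.2)
      = (fun p ↦ p.1 + p.2) ∘ Prod.map (η₁ * ·) (η₂ * ·) := rfl
  rw [this, ← Measure.map_map (by fun_prop) (by fun_prop),
    ← Measure.map_prod_map _ _ (by fun_prop) (by fun_prop), gaussianReal_map_const_mul,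
    gaussianReal_map_const_mul, ← Measure.conv, gaussianReal_conv_gaussianReal]
  congr 1
  ext
  simp [Real.coe_toNNReal _ (by positivity : (0 : ℝ) ≤ η₁ ^ 2 + η₂ ^ 2)]

lemma map_perp_dot_gaussianReal_prod :
    ((gaussianReal μ₁ 1).prod (gaussianReal μ₂ 1)).map
        (fun z ↦ (η₂ * z.1 - η₁ * z.2, η₁ * z.1 + η₂ * z.2))
      = (((gaussianReal μ₁ 1).prod (gaussianReal μ₂ 1)).map (fun z ↦ η₂ * z.1 - η₁ * z.2)).prod
          (gaussianReal (η₁ * μ₁ + η₂ * μ₂) (η₁ ^ 2 + η₂ ^ 2).toNNReal) := by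
  rw [← map_dot_gaussianReal_prod, ← indepFun_iff_map_prod_eq_prod_map_map (by fun_prop)
    (by fun_prop)]
  exact indepFun_perp_dot_gaussianReal_prod μ₁ μ₂ η₁ η₂

lemma preimage_perp_dot_setOf_mem (hη : η₁ ^ 2 + η₂ ^ 2 ≠ 0) (A : Set ℝ) :
    (fun z : ℝ × ℝ ↦ (η₂ * z.1 - η₁ * z.2, η₁ * z.1 + η₂ * z.2)) ⁻¹'
        {w | (η₁ * w.2 + η₂ * w.1) / (η₁ ^ 2 + η₂ ^ 2) ∈ A}
      = {z | z.1 ∈ A} := by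
  ext z
  simp only [mem_preimage, mem_ofPred_eq]
  rw [show (η₁ * (η₁ * z.1 + η₂ * z.2) + η₂ * (η₂ * z.1 - η₁ * z.2)) / (η₁ ^ 2 + η₂ ^ 2) = z.1
    by field_simp; ring]

end RotatedGaussian

/-- The selective z-test has level 0.05: if `Z = (Z₁, Z₂) ~ N(μ, I₂)` truncated to
`{z₁ ∈ A}`, the null `η·μ = δ` holds, and the test rejects when `D = η·Z` falls below
the 0.025-quantile or above the 0.975-quantile of the `N(δ, ‖η‖²)` distribution
truncated to `(‖η‖²A - η₂M)/η₁` (with `M = η⊥·Z`), then the rejection probability is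
exactly 0.05. -/
theorem selective_z_test_level (μ₁ μ₂ η₁ η₂ δ : ℝ) (hη₁ : η₁ ≠ 0)
    (hnull : η₁ * μ₁ + η₂ * μ₂ = δ)
    (A : Set ℝ) (hA : MeasurableSet A) (hApos : 0 < gaussianReal μ₁ 1 A)
    (μZ : Measure (ℝ × ℝ))
    (hμZ : μZ = truncTo2 ((gaussianReal μ₁ 1).prod (gaussianReal μ₂ 1)) {z | z.1 ∈ A})
    (ν : ℝ → Measure ℝ)
    (hν : ν = fun m => truncTo (gaussianReal δ ((η₁ ^ 2 + η₂ ^ 2).toNNReal))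
      {d | (η₁ * d + η₂ * m) / (η₁ ^ 2 + η₂ ^ 2) ∈ A}) :
    μZ {z | η₁ * z.1 + η₂ * z.2 < quantile (ν (η₂ * z.1 - η₁ * z.2)) 0.025 ∨
            quantile (ν (η₂ * z.1 - η₁ * z.2)) 0.975 < η₁ * z.1 + η₂ * z.2}
      = ENNReal.ofReal 0.05 := by
  subst hnull hμZ hν
  have hη : 0 < η₁ ^ 2 + η₂ ^ 2 := by positivity
  have : NullSingletonClass (gaussianReal (η₁ * μ₁ + η₂ * μ₂) (η₁ ^ 2 + η₂ ^ 2).toNNReal) :=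
    nullSingletonClass_gaussianReal (by simpa using hη)
  have hS : MeasurableSet {w : ℝ × ℝ | (η₁ * w.2 + η₂ * w.1) / (η₁ ^ 2 + η₂ ^ 2) ∈ A} :=
    hA.preimage (by fun_prop)
  have hγA : (gaussianReal μ₁ 1).prod (gaussianReal μ₂ 1) {z | z.1 ∈ A} ≠ 0 :=
    (measurePreserving_fst.measure_preimage hA.nullMeasurableSet).trans_ne hApos.ne'
  rw [← preimage_perp_dot_setOf_mem η₁ η₂ hη.ne' A] at hγA ⊢
  rw [show (0.05 : ℝ) = 0.025 + (1 - 0.975) by norm_num]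
  exact truncTo2_preimage_rejectionRegion_section _ hS (by norm_num) (by norm_num) (by norm_num)
    (by fun_prop) (map_perp_dot_gaussianReal_prod μ₁ μ₂ η₁ η₂) hγA
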